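/- Let 1/2 < μ ≤ 1 and let n ≥ 3 be an integer. If h_μ(μ) < 2·(1 − 2^{n−2}/(2^{n−1}−1)), then the tent map T_μ avoids the pattern σ_n = (n−1) n 1 2 3 ⋯ (n−2); that is, σ_n ∉ Allow(T_μ). -/

import Mathlib

/-! If the orbit `x₀, …, x_{n-1}` of `T_μ` realizes `σ_n`, then `x₂ < ⋯ < x_{n-1} < x₀ < x₁`.
Since `T_μ` expands on `[0, 1/2]` and reverses order on `(1/2, 1]`, this forces `x₁ > 1/2` and
`x₂, …, x_{n-2} ≤ 1/2`, so the functional equation gives `h(x₁) = 1 - h(x_{n-1}) / 2^{n-2}`.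
The commuter is monotone, hence `h(x_{n-1}) ≤ h(x₀) ≤ 1 - h(x₁)/2`, and eliminating `h(x_{n-1})`
gives `h(x₁) ≥ 2(1 - 2^{n-2}/(2^{n-1}-1))`. Finally `x₁ ≤ μ`, so `h(μ) ≥ h(x₁)`. -/

open Set

/-- The symmetric tent map of height `μ`:
`T_μ(x) = 2μx` for `x ≤ 1/2` and `T_μ(x) = 2μ(1-x)` for `x > 1/2`. -/
noncomputable def tentMap (μ : ℝ) (x : ℝ) : ℝ :=
  if x ≤ 1/2 then 2*μ*x else 2*μ*(1-x)

/-- `h : [0,1] → [0,1]` satisfies the commuter functional equation for `T_μ`: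
`h(x) = (1/2)·h(2μx)` for `0 ≤ x ≤ 1/2` and `h(x) = 1 - (1/2)·h(2μ(1-x))` for `1/2 < x ≤ 1`. -/
def IsCommuter (μ : ℝ) (h : ℝ → ℝ) : Prop :=
  (∀ x ∈ Icc (0:ℝ) 1, h x ∈ Icc (0:ℝ) 1) ∧
  (∀ x : ℝ, 0 ≤ x → x ≤ 1/2 → h x = (1/2) * h (2*μ*x)) ∧
  (∀ x : ℝ, 1/2 < x → x ≤ 1 → h x = 1 - (1/2) * h (2*μ*(1-x)))

/-- `Allows f p` means the permutation `p` of `{0, …, n-1}` is an allowed pattern of the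
map `f` on `[0,1]`: there is `x ∈ [0,1]` whose orbit `x, f(x), …, f^[n-1](x)` is in the
same relative order as `p 0, p 1, …, p (n-1)`. -/
def Allows (f : ℝ → ℝ) {n : ℕ} (p : Equiv.Perm (Fin n)) : Prop :=
  ∃ x ∈ Icc (0:ℝ) 1, ∀ i j : Fin n, p i < p j ↔ f^[(i:ℕ)] x < f^[(j:ℕ)] x

/-- The permutation σ_n = (n-1) n 1 2 ⋯ (n-2) (one-line notation, 1-indexed), i.e. in
0-indexed terms the map `i ↦ i + (n-2) (mod n)` on `Fin n`. -/
def sigmaPerm (n : ℕ) : Equiv.Perm (Fin n) := finRotate n ^ (n - 2)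

section TentMap

variable {μ x : ℝ}

theorem tentMap_of_le_half (hx : x ≤ 1/2) : tentMap μ x = 2 * μ * x := if_pos hx

theorem tentMap_of_half_lt (hx : 1/2 < x) : tentMap μ x = 2 * μ * (1 - x) :=
  if_neg (not_le.mpr hx)

theorem tentMap_mem_Icc (hμ : 0 ≤ μ) (hx : x ∈ Icc (0:ℝ) 1) : tentMap μ x ∈ Icc 0 μ := by
  obtain ⟨hx0, hx1⟩ := hx
  unfold tentMap
  split_ifs <;> constructor <;> nlinarith

theorem mapsTo_tentMap (hμ0 : 0 ≤ μ) (hμ1 : μ ≤ 1) :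
    MapsTo (tentMap μ) (Icc 0 1) (Icc 0 1) :=
  fun _ hx => Icc_subset_Icc_right hμ1 (tentMap_mem_Icc hμ0 hx)

theorem strictAntiOn_tentMap (hμ : 0 < μ) : StrictAntiOn (tentMap μ) (Ioi (1/2)) := by
  intro x hx y hy hxy
  rw [tentMap_of_half_lt hx, tentMap_of_half_lt hy]
  nlinarith

theorem half_lt_of_tentMap_lt (hμ : 1/2 ≤ μ) (hx : 0 ≤ x) (h : tentMap μ x < x) : 1/2 < x := by
  by_contra! hle
  rw [tentMap_of_le_half hle] at h
  nlinarith

end TentMap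

namespace IsCommuter

variable {μ x : ℝ} {h : ℝ → ℝ}

theorem apply_of_le_half (hc : IsCommuter μ h) (hx0 : 0 ≤ x) (hx : x ≤ 1/2) :
    h x = h (tentMap μ x) / 2 := by
  rw [hc.2.1 x hx0 hx, tentMap_of_le_half hx]
  ring

theorem apply_of_half_lt (hc : IsCommuter μ h) (hx : 1/2 < x) (hx1 : x ≤ 1) :
    h x = 1 - h (tentMap μ x) / 2 := by
  rw [hc.2.2 x hx hx1, tentMap_of_half_lt hx]
  ring

theorem apply_le_one_sub_half (hc : IsCommuter μ h) (hμ0 : 0 ≤ μ) (hμ1 : μ ≤ 1)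
    (hx : x ∈ Icc (0:ℝ) 1) : h x ≤ 1 - h (tentMap μ x) / 2 := by
  rcases le_or_gt x (1/2) with hx2 | hx2
  · have hTx := hc.1 _ (mapsTo_tentMap hμ0 hμ1 hx)
    rw [hc.apply_of_le_half hx.1 hx2]
    linarith [hTx.2]
  · exact (hc.apply_of_half_lt hx2 hx.2).le

theorem apply_eq_div_two_pow (hc : IsCommuter μ h) {k : ℕ}
    (hk : ∀ i < k, (tentMap μ)^[i] x ∈ Icc (0:ℝ) (1/2)) :
    h x = h ((tentMap μ)^[k] x) / 2 ^ k := by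
  induction k with
  | zero => simp
  | succ k ih =>
    obtain ⟨h0, h1⟩ := hk k k.lt_succ_self
    rw [ih fun i hi => hk i (hi.trans k.lt_succ_self), Function.iterate_succ_apply',
      hc.apply_of_le_half h0 h1, pow_succ]
    ring

/-- While `u` and `v` lie on the same side of `1/2`, the commuter equation passes to
`tentMap μ u` and `tentMap μ v`, which are `2μ` times further apart; once `1/2` separates them,
`h u ≤ 1/2 ≤ h v`. -/
theorem apply_le_apply_of_one_lt_pow_mul (hc : IsCommuter μ h) (hμ1 : 1/2 < μ) (hμ2 : μ ≤ 1)
    (k : ℕ) {u v : ℝ} (hu : u ∈ Icc (0:ℝ) 1) (hv : v ∈ Icc (0:ℝ) 1) (huv : u < v)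
    (hk : 1 < (2 * μ) ^ k * (v - u)) : h u ≤ h v := by
  induction k generalizing u v with
  | zero => linarith [hu.1, hv.2]
  | succ k ih =>
    rw [pow_succ, mul_assoc] at hk
    have hTu := mapsTo_tentMap (by linarith) hμ2 hu
    have hTv := mapsTo_tentMap (by linarith) hμ2 hv
    rcases le_or_gt v (1/2) with hv2 | hv2
    · have hu2 : u ≤ 1/2 := huv.le.trans hv2
      have := ih hTu hTv
        (by rw [tentMap_of_le_half hu2, tentMap_of_le_half hv2]; nlinarith)
        (by rwa [tentMap_of_le_half hu2, tentMap_of_le_half hv2, ← mul_sub])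
      rw [hc.apply_of_le_half hu.1 hu2, hc.apply_of_le_half hv.1 hv2]
      linarith
    rcases le_or_gt u (1/2) with hu2 | hu2
    · rw [hc.apply_of_le_half hu.1 hu2, hc.apply_of_half_lt hv2 hv.2]
      linarith [(hc.1 _ hTu).2, (hc.1 _ hTv).2]
    · have := ih hTv hTu
        (by rw [tentMap_of_half_lt hu2, tentMap_of_half_lt hv2]; nlinarith)
        (by rwa [tentMap_of_half_lt hu2, tentMap_of_half_lt hv2, ← mul_sub,
          show 1 - u - (1 - v) = v - u by ring])
      rw [hc.apply_of_half_lt hu2 hu.2, hc.apply_of_half_lt hv2 hv.2]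
      linarith

theorem monotoneOn (hc : IsCommuter μ h) (hμ1 : 1/2 < μ) (hμ2 : μ ≤ 1) :
    MonotoneOn h (Icc 0 1) := by
  intro u hu v hv huv
  rcases huv.eq_or_lt with rfl | huv
  · rfl
  obtain ⟨k, hk⟩ := pow_unbounded_of_one_lt (v - u)⁻¹ (by linarith : (1:ℝ) < 2 * μ)
  refine hc.apply_le_apply_of_one_lt_pow_mul hμ1 hμ2 k hu hv huv ?_
  rwa [inv_lt_iff_one_lt_mul₀ (sub_pos.mpr huv)] at hk

end IsCommuter

theorem val_finRotate_pow_apply {n : ℕ} (k : ℕ) (i : Fin n) :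
    ((finRotate n ^ k) i : ℕ) = (i + k) % n := by
  induction k with
  | zero => simp [Nat.mod_eq_of_lt i.isLt]
  | succ k ih =>
    have := i.neZero
    rw [pow_succ', Equiv.Perm.mul_apply, finRotate_apply, Fin.val_add, Fin.val_one', ih]
    simp [Nat.add_mod, ← add_assoc]

theorem val_sigmaPerm_apply {n : ℕ} (hn : 2 ≤ n) (i : Fin n) :
    (sigmaPerm n i : ℕ) = if 2 ≤ (i : ℕ) then (i : ℕ) - 2 else (i : ℕ) + (n - 2) := by
  rw [sigmaPerm, val_finRotate_pow_apply]
  split_ifs with hi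
  · rw [Nat.mod_eq_sub_mod (by omega), Nat.mod_eq_of_lt (by omega)]
    omega
  · exact Nat.mod_eq_of_lt (by omega)

theorem Allows.exists_orbit_of_sigmaPerm {f : ℝ → ℝ} {n : ℕ} (hn : 2 ≤ n)
    (hf : Allows f (sigmaPerm n)) :
    ∃ x ∈ Icc (0:ℝ) 1, x < f x ∧ (∀ i, 2 ≤ i → i < n → f^[i] x < x) ∧
      ∀ i, 2 ≤ i → i + 1 < n → f^[i] x < f^[i + 1] x := by
  obtain ⟨x, hx, hp⟩ := hf
  have hlt : ∀ i j (hi : i < n) (hj : j < n), sigmaPerm n ⟨i, hi⟩ < sigmaPerm n ⟨j, hj⟩ →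
      f^[i] x < f^[j] x := fun i j hi hj => (hp ⟨i, hi⟩ ⟨j, hj⟩).mp
  simp only [Fin.lt_def, val_sigmaPerm_apply hn] at hlt
  refine ⟨x, hx, hlt 0 1 (by omega) (by omega) ?_, fun i h2 hi => hlt i 0 hi (by omega) ?_,
    fun i h2 hi => hlt i (i + 1) (by omega) hi ?_⟩ <;> split_ifs <;> omega

theorem iterate_tentMap_le_half_of_orbit {μ x : ℝ} {n : ℕ} (hμ : 0 < μ)
    (h01 : x < tentMap μ x) (hback : ∀ i, 2 ≤ i → i < n → (tentMap μ)^[i] x < x)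
    (hinc : ∀ i, 2 ≤ i → i + 1 < n → (tentMap μ)^[i] x < (tentMap μ)^[i + 1] x)
    {i : ℕ} (h2 : 2 ≤ i) (hi : i + 1 < n) : (tentMap μ)^[i] x ≤ 1/2 := by
  set T := tentMap μ
  have hT := strictAntiOn_tentMap hμ
  by_contra! hgt
  have hgt' : 1/2 < T^[i + 1] x := hgt.trans (hinc i h2 hi)
  have hstep : T^[i + 2] x < T^[i + 1] x :=
    calc T^[i + 2] x = T (T^[i + 1] x) := Function.iterate_succ_apply' T (i + 1) x
      _ < T (T^[i] x) := hT hgt hgt' (hinc i h2 hi)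
      _ = T^[i + 1] x := (Function.iterate_succ_apply' T i x).symm
  rcases lt_or_eq_of_le (show i + 2 ≤ n by omega) with hi2 | rfl
  · exact (hinc (i + 1) (by omega) hi2).not_gt hstep
  · have hx : T^[i + 1] x < x := hback (i + 1) (by omega) (by omega)
    have : T x < T^[i + 2] x := by
      rw [Function.iterate_succ_apply']
      exact hT hgt' (hgt'.trans hx) hx
    linarith

theorem two_mul_one_sub_div_le {P a b : ℝ} (hP : 1/2 < P) (ha : a ≤ 1 - b / 2)
    (hb : b = 1 - a / P) : 2 * (1 - P / (2 * P - 1)) ≤ b := by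
  have h2P : 0 < 2 * P - 1 := by linarith
  have ha' : a ≤ P / (2 * P - 1) := by
    rw [hb] at ha
    rw [le_div_iff₀ h2P]
    field_simp at ha
    linarith
  calc 2 * (1 - P / (2 * P - 1)) = 1 - P / (2 * P - 1) / P := by field_simp; ring
    _ ≤ b := by rw [hb]; gcongr

/-- For `1/2 < μ ≤ 1` and `n ≥ 3`: if `h_μ(μ) < 2(1 - 2^(n-2)/(2^(n-1)-1))`, then
`T_μ` avoids the pattern `σ_n = (n-1) n 1 2 ⋯ (n-2)`. -/
theorem tentMap_avoids_sigma_of_commuter_bound (μ : ℝ) (hμ1 : 1/2 < μ) (hμ2 : μ ≤ 1)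
    (n : ℕ) (hn : 3 ≤ n) (h : ℝ → ℝ) (hc : IsCommuter μ h)
    (hb : h μ < 2 * (1 - (2:ℝ)^(n-2)/((2:ℝ)^(n-1)-1))) :
    ¬ Allows (tentMap μ) (sigmaPerm n) := by
  intro hA
  obtain ⟨x, hx, h01, hback, hinc⟩ := hA.exists_orbit_of_sigmaPerm (by omega)
  obtain ⟨m, rfl⟩ : ∃ m, n = m + 3 := ⟨n - 3, by omega⟩
  set T := tentMap μ
  have hT : MapsTo T (Icc 0 1) (Icc 0 1) := mapsTo_tentMap (by linarith) hμ2
  have hx1 : 1/2 < T x :=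
    half_lt_of_tentMap_lt hμ1.le (hT hx).1 ((hback 2 le_rfl (by omega)).trans h01)
  have htel : h (T^[2] x) = h (T^[m + 2] x) / 2 ^ m := by
    rw [Function.iterate_add_apply]
    refine hc.apply_eq_div_two_pow fun i hi => ⟨(hT.iterate _ (hT.iterate 2 hx)).1, ?_⟩
    rw [← Function.iterate_add_apply]
    exact iterate_tentMap_le_half_of_orbit (by linarith) h01 hback hinc (by omega) (by omega)
  have hx1_eq : h (T x) = 1 - h (T^[m + 2] x) / 2 ^ (m + 1) := by
    rw [hc.apply_of_half_lt hx1 (hT hx).2, show tentMap μ (T x) = T^[2] x from rfl, htel, pow_succ]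
    ring
  have hx0 : h (T^[m + 2] x) ≤ 1 - h (T x) / 2 :=
    (hc.monotoneOn hμ1 hμ2 (hT.iterate _ hx) hx (hback (m + 2) (by omega) (by omega)).le).trans
      (hc.apply_le_one_sub_half (by linarith) hμ2 hx)
  have hμx : h (T x) ≤ h μ :=
    hc.monotoneOn hμ1 hμ2 (hT hx) ⟨by linarith, hμ2⟩ (tentMap_mem_Icc (by linarith) hx).2
  have key := two_mul_one_sub_div_le
    ((by norm_num : (1:ℝ)/2 < 1).trans_le (one_le_pow₀ (by norm_num))) hx0 hx1_eq
  rw [show m + 3 - 2 = m + 1 by omega, show m + 3 - 1 = m + 2 by omega, pow_succ' _ (m + 1)] at hb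
  linarith
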